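/- Let λ > 0, let s ≥ 1 be an integer, let c > 0 be real, and let η ∈ ℂ with |η| < 1. Define the harmonic polynomial p_2(z) = z + conj(η · Σ_{n=1}^s C(s,n) · ((s−n+1)_n/(c)_n) · z^{n+1}), where C(s,n) is the binomial coefficient and (x)_m the Pochhammer symbol. If s²·Γ(c)·Γ(c+2s) < λ·(c+2s−1)·(Γ(c+s))², then p_2 belongs to Ω_H^0(λ). -/

import Mathlib

open Complex

noncomputable section

/-- The open unit disk in the complex plane. -/
def unitDisk : Set ℂ := {z : ℂ | ‖z‖ < 1}

/-- The class `Ω_H^0(λ)` of harmonic mappings `f = h + conj ∘ g`. -/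
def OmegaH0 (lam : ℝ) (h g : ℂ → ℂ) : Prop :=
  AnalyticOnNhd ℂ h unitDisk ∧ AnalyticOnNhd ℂ g unitDisk ∧
    h 0 = 0 ∧ deriv h 0 = 1 ∧ g 0 = 0 ∧ deriv g 0 = 0 ∧
    ∀ z ∈ unitDisk,
      ‖h z - z * deriv h z‖ < lam - ‖g z - z * deriv g z‖

/-- The Pochhammer symbol \`(x)_n = x (x+1) ⋯ (x+n-1)\`. -/
def poch (x : ℝ) (n : ℕ) : ℝ := ∏ k ∈ Finset.range n, (x + k)

lemma poch_pos {x : ℝ} (hx : 0 < x) (n : ℕ) : 0 < poch x n :=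
  Finset.prod_pos fun k _ => by positivity

lemma poch_succ (x : ℝ) (n : ℕ) : poch x (n+1) = poch x n * (x + n) :=
  Finset.prod_range_succ _ _

lemma poch_add (x : ℝ) (m n : ℕ) : poch x (m+n) = poch x m * poch (x + m) n := by
  unfold poch
  rw [Finset.prod_range_add]
  congr 1
  exact Finset.prod_congr rfl fun k _ => by push_cast; ring

lemma desc_eval (n : ℕ) (x : ℝ) :
    (descPochhammer ℝ n).eval x = ∏ j ∈ Finset.range n, (x - j) := by
  induction n with
  | zero => simp
  | succ n ih => rw [descPochhammer_succ_eval, ih, Finset.prod_range_succ]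

lemma desc_eval_poch (n : ℕ) (a : ℝ) :
    (descPochhammer ℝ n).eval (a + n - 1) = poch a n := by
  rw [desc_eval, poch, ← Finset.prod_range_reflect]
  refine Finset.prod_congr rfl fun j hj => ?_
  have hj' := Finset.mem_range.mp hj
  have h1 : 1 ≤ n := Nat.one_le_iff_ne_zero.mpr (by omega)
  rw [Nat.cast_sub (by omega : j ≤ n - 1), Nat.cast_sub h1]
  push_cast; ring

lemma desc_eval_poch' (n : ℕ) (x : ℝ) :
    (descPochhammer ℝ n).eval x = poch (x - n + 1) n := by
  have h := desc_eval_poch n (x - n + 1)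
  rw [show x - (n:ℝ) + 1 + n - 1 = x by ring] at h
  exact h

lemma smeval_desc (n : ℕ) (x : ℝ) :
    (descPochhammer ℤ n).smeval x = (descPochhammer ℝ n).eval x := by
  rw [← Polynomial.aeval_eq_smeval x (descPochhammer ℤ n),
    Polynomial.aeval_def, ← Polynomial.eval_map, descPochhammer_map]

lemma vandermonde (s : ℕ) (c : ℝ) :
    ∑ n ∈ Finset.range (s+1),
      (s.choose n : ℝ) * poch ((s:ℝ) - n + 1) n * poch (c + n) (s - n) = poch (c + s) s := by
  have h := Ring.descPochhammer_smeval_add (R := ℝ) (r := (s:ℝ)) (s := c + s - 1) s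
    (Commute.all _ _)
  rw [Finset.Nat.sum_antidiagonal_eq_sum_range_succ_mk] at h
  rw [smeval_desc, desc_eval_poch'] at h
  rw [show (s:ℝ) + (c + s - 1) - s + 1 = c + s by ring, Nat.succ_eq_add_one] at h
  rw [h]
  refine Finset.sum_congr rfl fun n hn => ?_
  have hns : n ≤ s := by
    have := Finset.mem_range.mp hn; omega
  rw [smeval_desc, smeval_desc, desc_eval_poch', desc_eval_poch']
  have e2 : c + (s:ℝ) - 1 - ((s - n : ℕ):ℝ) + 1 = c + n := by
    rw [Nat.cast_sub hns]; ring
  rw [e2]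
  ring

lemma Gamma_poch (c : ℝ) (hc : 0 < c) (n : ℕ) :
    Real.Gamma (c + n) = poch c n * Real.Gamma c := by
  induction n with
  | zero => simp [poch]
  | succ n ih =>
    have : c + ((n:ℝ) + 1) = (c + n) + 1 := by ring
    rw [Nat.cast_succ, this, Real.Gamma_add_one (by positivity), ih, poch_succ]
    ring

lemma poch_split (x : ℝ) (s : ℕ) (hs : 1 ≤ s) :
    poch x s = poch x (s-1) * (x + s - 1) := by
  obtain ⟨t, rfl⟩ : ∃ t, s = t + 1 := ⟨s-1, by omega⟩
  rw [poch_succ, Nat.add_sub_cancel]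
  congr 1
  push_cast; ring

lemma key (s : ℕ) (hs : 1 ≤ s) (c : ℝ) (hc : 0 < c) :
    (∑ n ∈ Finset.Icc 1 s,
        (n:ℝ) * ((s.choose n : ℝ) * poch ((s:ℝ) - n + 1) n / poch c n)) * poch c s
      = (s:ℝ)^2 * poch (c + s) (s-1) := by
  rw [Finset.sum_mul]
  have step1 : ∀ n ∈ Finset.Icc 1 s,
      (n:ℝ) * ((s.choose n : ℝ) * poch ((s:ℝ) - n + 1) n / poch c n) * poch c s
        = (n:ℝ) * ((s.choose n : ℝ) * poch ((s:ℝ) - n + 1) n * poch (c + n) (s - n)) := by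
    intro n hn
    obtain ⟨h1, h2⟩ := Finset.mem_Icc.mp hn
    have : poch c s = poch c n * poch (c + n) (s - n) := by
      rw [← poch_add, Nat.add_sub_cancel' h2]
    rw [this]
    have hne : poch c n ≠ 0 := ne_of_gt (poch_pos hc n)
    field_simp
  rw [Finset.sum_congr rfl step1, ← Finset.Ico_add_one_right_eq_Icc, Finset.sum_Ico_eq_sum_range]
  have hrange : s + 1 - 1 = s := by omega
  rw [hrange]
  have hs' : s - 1 + 1 = s := by omega
  have term : ∀ m ∈ Finset.range s,
      ((1 + m : ℕ) : ℝ) * ((s.choose (1+m) : ℝ) * poch ((s:ℝ) - (1+m : ℕ) + 1) (1+m)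
          * poch (c + (1+m : ℕ)) (s - (1+m))) =
      (s:ℝ)^2 * (((s-1).choose m : ℝ) * poch (((s-1:ℕ):ℝ) - m + 1) m
          * poch ((c+1) + m) ((s-1) - m)) := by
    intro m hm
    have hms : m < s := Finset.mem_range.mp hm
    have hchoose : (1 + m) * s.choose (1 + m) = s * (s - 1).choose m := by
      have h2 := Nat.add_one_mul_choose_eq (s-1) m
      rw [hs'] at h2
      rw [add_comm 1 m, h2]
      ring
    have hc1 : ((1+m:ℕ):ℝ) * (s.choose (1+m) : ℝ) = (s:ℝ) * ((s-1).choose m : ℝ) := by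
      exact_mod_cast congrArg (Nat.cast : ℕ → ℝ) hchoose
    have hp1 : poch ((s:ℝ) - (1+m : ℕ) + 1) (1+m) = poch ((s:ℝ) - m) m * (s:ℝ) := by
      rw [add_comm 1 m]
      have harg : (s:ℝ) - ((m+1:ℕ):ℝ) + 1 = (s:ℝ) - m := by push_cast; ring
      rw [harg, poch_succ]
      congr 1
      push_cast; ring
    have harg2 : (s:ℝ) - m = (((s-1:ℕ):ℝ)) - m + 1 := by
      rw [Nat.cast_sub hs]; push_cast; ring
    have hp2 : poch (c + (1+m : ℕ)) (s - (1+m)) = poch ((c+1) + m) ((s-1) - m) := by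
      have harg : c + ((1+m:ℕ):ℝ) = (c+1) + m := by push_cast; ring
      have hnat : s - (1+m) = (s-1) - m := by omega
      rw [harg, hnat]
    rw [hp1, hp2, harg2]
    linear_combination ((s:ℝ) * poch (((s-1:ℕ):ℝ) - m + 1) m * poch ((c+1) + m) ((s-1) - m)) * hc1
  rw [Finset.sum_congr rfl term, ← Finset.mul_sum]
  congr 1
  have := vandermonde (s-1) (c+1)
  rw [hs'] at this
  rw [this]
  congr 1
  rw [Nat.cast_sub hs]
  push_cast
  ring

theorem stmt18 (lam : ℝ) (hlam : 0 < lam) (s : ℕ) (hs : 1 ≤ s) (c : ℝ) (hc : 0 < c)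
    (η : ℂ) (hη : ‖η‖ < 1)
    (hcond : (s : ℝ) ^ 2 * Real.Gamma c * Real.Gamma (c + 2 * s) <
      lam * (c + 2 * s - 1) * Real.Gamma (c + s) ^ 2) :
    OmegaH0 lam (fun z => z)
      (fun z => η * ∑ n ∈ Finset.Icc 1 s,
        (((s.choose n : ℝ) * poch ((s : ℝ) - n + 1) n / poch c n : ℝ) : ℂ) *
          z ^ (n + 1)) := by
  set a : ℕ → ℝ := fun n => (s.choose n : ℝ) * poch ((s:ℝ) - n + 1) n / poch c n with ha
  set S : ℝ := ∑ n ∈ Finset.Icc 1 s, (n:ℝ) * a n with hSdef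
  have hs1 : (1:ℝ) ≤ (s:ℝ) := by exact_mod_cast hs
  have hpcs : 0 < poch c s := poch_pos hc s
  have hpcs1 : 0 < poch (c + s) (s-1) := poch_pos (by positivity) _
  have hc2s : 0 < c + 2*(s:ℝ) - 1 := by nlinarith
  have hkey : S * poch c s = (s:ℝ)^2 * poch (c + s) (s-1) := key s hs c hc
  -- S > 0
  have hSpos : 0 < S := by
    have h1 : 0 < S * poch c s := by
      rw [hkey]; positivity
    nlinarith
  -- S < lam
  have hSlam : S < lam := by
    have e1 : Real.Gamma (c + 2*(s:ℝ)) = poch c (2*s) * Real.Gamma c := by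
      have h := Gamma_poch c hc (2*s)
      push_cast at h
      exact h
    have e2 : Real.Gamma (c + (s:ℝ)) = poch c s * Real.Gamma c := Gamma_poch c hc s
    rw [e1, e2] at hcond
    have hΓ : 0 < Real.Gamma c := Real.Gamma_pos_of_pos hc
    have h4 : (s:ℝ)^2 * poch c (2*s) < lam * (c + 2*(s:ℝ) - 1) * (poch c s)^2 := by
      refine (mul_lt_mul_iff_left₀ (show (0:ℝ) < (Real.Gamma c)^2 by positivity)).mp ?_
      calc (s:ℝ)^2 * poch c (2*s) * (Real.Gamma c)^2
          = (s:ℝ)^2 * Real.Gamma c * (poch c (2*s) * Real.Gamma c) := by ring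
        _ < lam * (c + 2*(s:ℝ) - 1) * (poch c s * Real.Gamma c)^2 := hcond
        _ = lam * (c + 2*(s:ℝ) - 1) * (poch c s)^2 * (Real.Gamma c)^2 := by ring
    have hsplit : poch c (2*s) = poch c s * (poch (c + s) (s-1) * (c + 2*(s:ℝ) - 1)) := by
      rw [two_mul, poch_add, poch_split (c + s) s hs]
      ring
    rw [hsplit] at h4
    have h5 : (s:ℝ)^2 * poch (c + s) (s-1) < lam * poch c s := by
      refine (mul_lt_mul_iff_left₀ (show (0:ℝ) < poch c s * (c + 2*(s:ℝ) - 1) from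
        mul_pos hpcs hc2s)).mp ?_
      calc (s:ℝ)^2 * poch (c + s) (s-1) * (poch c s * (c + 2*(s:ℝ) - 1))
          = (s:ℝ)^2 * (poch c s * (poch (c + s) (s-1) * (c + 2*(s:ℝ) - 1))) := by ring
        _ < lam * (c + 2*(s:ℝ) - 1) * (poch c s)^2 := h4
        _ = lam * poch c s * (poch c s * (c + 2*(s:ℝ) - 1)) := by ring
    have h6 : S * poch c s < lam * poch c s := by rw [hkey]; exact h5
    exact lt_of_mul_lt_mul_right h6 (le_of_lt hpcs)
  -- a n nonneg
  have hapos : ∀ n ∈ Finset.Icc 1 s, 0 ≤ a n := by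
    intro n hn
    obtain ⟨h1, h2⟩ := Finset.mem_Icc.mp hn
    have hn2 : (n:ℝ) ≤ (s:ℝ) := by exact_mod_cast h2
    have hp : 0 < poch ((s:ℝ) - n + 1) n := poch_pos (by linarith) n
    have hp2 : 0 < poch c n := poch_pos hc n
    rw [ha]
    positivity
  -- the function g and its derivative
  set g : ℂ → ℂ := fun z => η * ∑ n ∈ Finset.Icc 1 s, ((a n : ℝ) : ℂ) * z ^ (n + 1) with hg
  have hderiv : ∀ z : ℂ, HasDerivAt g
      (η * ∑ n ∈ Finset.Icc 1 s, ((a n : ℝ) : ℂ) * ((n+1) * z ^ n)) z := by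
    intro z
    refine HasDerivAt.const_mul η (HasDerivAt.fun_sum fun n _ => ?_)
    have h := (hasDerivAt_pow (n+1) z).const_mul (((a n : ℝ) : ℂ))
    simpa using h
  have hopen : IsOpen unitDisk := isOpen_lt continuous_norm continuous_const
  refine ⟨analyticOnNhd_id, ?_, rfl, by simp, ?_, ?_, ?_⟩
  · -- g analytic
    have hd : Differentiable ℂ g := by rw [hg]; fun_prop
    exact (hd.differentiableOn).analyticOnNhd hopen
  · -- g 0 = 0
    show g 0 = 0
    rw [hg]
    simp
  · -- deriv g 0 = 0
    show deriv g 0 = 0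
    rw [(hderiv 0).deriv]
    have : ∑ n ∈ Finset.Icc 1 s, ((a n : ℝ) : ℂ) * ((n+1) * (0:ℂ) ^ n) = 0 := by
      refine Finset.sum_eq_zero fun n hn => ?_
      have h1 : 1 ≤ n := (Finset.mem_Icc.mp hn).1
      rw [zero_pow (by omega : n ≠ 0)]
      ring
    rw [this, mul_zero]
  · -- the inequality
    intro z hz
    have hzabs : ‖z‖ < 1 := hz
    have hderivh : deriv (fun z : ℂ => z) z = 1 := by simp
    have hh0 : ‖z - z * deriv (fun z : ℂ => z) z‖ = 0 := by
      rw [hderivh, mul_one, sub_self, norm_zero]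
    show ‖z - z * deriv (fun z : ℂ => z) z‖ < lam - ‖g z - z * deriv g z‖
    rw [hh0]
    have hG : g z - z * deriv g z = η * ∑ n ∈ Finset.Icc 1 s,
        (-(n:ℂ)) * (((a n : ℝ) : ℂ) * z ^ (n+1)) := by
      rw [(hderiv z).deriv, hg]
      simp only
      have e : ∀ (A B : ℂ), η * A - z * (η * B) = η * (A - z * B) := fun A B => by ring
      rw [e]
      congr 1
      rw [Finset.mul_sum, ← Finset.sum_sub_distrib]
      refine Finset.sum_congr rfl fun n hn => ?_
      rw [pow_succ]
      ring
    rw [hG]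
    have habs : ‖η * ∑ n ∈ Finset.Icc 1 s,
        (-(n:ℂ)) * (((a n : ℝ) : ℂ) * z ^ (n+1))‖ < S := by
      rw [norm_mul]
      calc ‖η‖ * ‖∑ n ∈ Finset.Icc 1 s,
            (-(n:ℂ)) * (((a n : ℝ) : ℂ) * z ^ (n+1))‖
          ≤ ‖η‖ * S := by
            refine mul_le_mul_of_nonneg_left ?_ (norm_nonneg η)
            calc ‖∑ n ∈ Finset.Icc 1 s, (-(n:ℂ)) * (((a n : ℝ) : ℂ) * z ^ (n+1))‖
                ≤ ∑ n ∈ Finset.Icc 1 s,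
                    ‖(-(n:ℂ)) * (((a n : ℝ) : ℂ) * z ^ (n+1))‖ :=
                  norm_sum_le _ _
              _ ≤ S := by
                  rw [hSdef]
                  refine Finset.sum_le_sum fun n hn => ?_
                  rw [norm_mul, norm_mul, norm_neg, Complex.norm_natCast,
                    Complex.norm_real, Real.norm_eq_abs, _root_.abs_of_nonneg (hapos n hn), norm_pow]
                  have h1 : ‖z‖ ^ (n+1) ≤ 1 :=
                    pow_le_one₀ (norm_nonneg z) (le_of_lt hzabs)
                  have h2 : 0 ≤ (n:ℝ) * a n := by
                    have := hapos n hn; positivity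
                  calc (n:ℝ) * (a n * ‖z‖ ^ (n+1))
                      ≤ (n:ℝ) * (a n * 1) := by
                        refine mul_le_mul_of_nonneg_left ?_ (Nat.cast_nonneg n)
                        exact mul_le_mul_of_nonneg_left h1 (hapos n hn)
                    _ = (n:ℝ) * a n := by ring
        _ < S := by
            rcases eq_or_lt_of_le (norm_nonneg η) with h | h
            · rw [← h, zero_mul]; exact hSpos
            · calc ‖η‖ * S < 1 * S := by
                    exact mul_lt_mul_of_pos_right hη hSpos
                _ = S := one_mul S
    linarith
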